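/- arXiv:1509.00719 — 3 statements merged into one kernel-verified Lean document; each statement's English description precedes it below -/
import Mathlib

section
/- Let G and H be Polish groups and let ψ : G → H be a normal compression. If α : H × G → G is any function satisfying ψ(α(h,g)) = h·ψ(g)·h⁻¹ for all h ∈ H and g ∈ G, then α is continuous (as a map from the product space H × G to G). -/
/-!
Injectivity of `ψ` makes `α` an action of `H` on `G` by group automorphisms, and `α` is Borel
because `ψ`, a continuous injection between Polish spaces, is a Borel isomorphism onto its image
(Lusin–Souslin). Each automorphism `α (h, ·)` is then continuous by Pettis' automatic continuity
argument. Joint continuity at `(1, g)` is another Baire category argument: countably many Borel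
sets of `h`, recording into which basic open sets `α (h, ·)` and `α (h⁻¹, ·)` send a countable
dense set, cover `H`; one of them, `B`, is non-meagre, so `B⁻¹ * B` is a neighbourhood of `1`,
and writing `s = x * y` with `x⁻¹, y ∈ B` controls `α (s, ·)` near `g`.
-/

open Filter Set Topology TopologicalSpace
open scoped Pointwise

section Baire

variable {X : Type*} [TopologicalSpace X] [BaireSpace X]

theorem exists_not_isMeagre_of_forall_mem {ι : Type*} [Nonempty X] {c : Set ι}
    (hc : c.Countable) {B : ι → Set X} (hB : ∀ x, ∃ i ∈ c, x ∈ B i) :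
    ∃ i ∈ c, ¬IsMeagre (B i) := by
  by_contra! h
  refine not_isMeagre_of_isOpen isOpen_univ univ_nonempty ((isMeagre_biUnion hc h).mono ?_)
  simpa [eq_univ_iff_forall] using hB

/-- Pettis' theorem. -/
theorem BaireMeasurableSet.inv_mul_mem_nhds_one [Group X] [IsTopologicalGroup X] {A : Set X}
    (hA : BaireMeasurableSet A) (hA_meagre : ¬IsMeagre A) : A⁻¹ * A ∈ 𝓝 1 := by
  obtain ⟨u, hu, hAu⟩ := hA.residualEq_isOpen
  rw [eventuallyEq_set] at hAu
  obtain ⟨v, hv⟩ : u.Nonempty := by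
    rw [nonempty_iff_ne_empty]
    rintro rfl
    exact hA_meagre (by filter_upwards [hAu] with x hx; simpa using hx)
  have hvu : {s | v * s ∈ u} ∈ 𝓝 1 :=
    (continuous_const_mul v).continuousAt.preimage_mem_nhds (by simpa using hu.mem_nhds hv)
  refine mem_of_superset hvu fun s hs => ?_
  have hAu_s : ∀ᶠ x in residual X, x * s ∈ A ↔ x * s ∈ u :=
    tendsto_residual_of_isOpenMap (continuous_mul_const s) (isOpenMap_mul_right s) hAu
  obtain ⟨x, ⟨hxu, hxsu⟩, hxA, hxsA⟩ :=
    (dense_of_mem_residual (hAu.and hAu_s)).inter_open_nonempty (u ∩ (· * s) ⁻¹' u)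
      (hu.inter (hu.preimage (continuous_mul_const s))) ⟨v, hv, hs⟩
  exact ⟨x⁻¹, by simpa using hxA.2 hxu, x * s, hxsA.2 hxsu, by group⟩

end Baire

theorem MonoidHom.continuous_of_measurable {X Y : Type*}
    [Group X] [TopologicalSpace X] [IsTopologicalGroup X] [BaireSpace X]
    [MeasurableSpace X] [BorelSpace X]
    [Group Y] [TopologicalSpace Y] [IsTopologicalGroup Y] [SeparableSpace Y]
    [MeasurableSpace Y] [OpensMeasurableSpace Y]
    (f : X →* Y) (hf : Measurable f) : Continuous f := by
  refine continuous_of_continuousAt_one f ?_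
  rw [ContinuousAt, map_one]
  intro W hW
  have hW' : ∀ᶠ p in 𝓝 (1 : Y) ×ˢ 𝓝 1, p.1⁻¹ * p.2 ∈ W := by
    rw [← nhds_prod_eq]
    exact (continuous_fst.inv.mul continuous_snd).continuousAt.preimage_mem_nhds
      (by simpa using hW)
  obtain ⟨V, ⟨hV1, hVo⟩, hVW⟩ := ((nhds_basis_opens (1 : Y)).prod_self).eventually_iff.1 hW'
  obtain ⟨D, hDc, hD⟩ := exists_countable_dense Y
  have hcover : ∀ x, ∃ d ∈ D, d⁻¹ * f x ∈ V := fun x =>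
    hD.exists_mem_open (hVo.preimage (continuous_inv.mul continuous_const))
      ⟨f x, show (f x)⁻¹ * f x ∈ V by simpa using hV1⟩
  obtain ⟨d, -, hd⟩ :=
    exists_not_isMeagre_of_forall_mem hDc (B := fun d => {x | d⁻¹ * f x ∈ V}) hcover
  have hA : MeasurableSet {x | d⁻¹ * f x ∈ V} :=
    hf (hVo.preimage (continuous_const_mul d⁻¹)).measurableSet
  refine mem_map.2 <| mem_of_superset (hA.baireMeasurableSet.inv_mul_mem_nhds_one hd) ?_
  rintro _ ⟨x, hx, y, hy, rfl⟩
  have := @hVW (d⁻¹ * f x⁻¹, d⁻¹ * f y) ⟨hx, hy⟩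
  simpa [mul_assoc] using this

theorem Set.MapsTo.closure_of_dense_inter {X Y : Type*} [TopologicalSpace X] [TopologicalSpace Y]
    {f : X → Y} {D U : Set X} {F : Set Y} (h : MapsTo f (U ∩ D) F) (hf : Continuous f)
    (hD : Dense D) (hU : IsOpen U) (hF : IsClosed F) : MapsTo f (closure U) F :=
  hF.closure_eq ▸ (h.closure hf).mono_left (closure_minimal (hD.open_subset_closure_inter hU)
    isClosed_closure)

theorem measurableSet_setOf_mapsTo {α β γ : Type*} [MeasurableSpace α] [MeasurableSpace γ]
    {f : α → β → γ} {s : Set β} {t : Set γ} (hs : s.Countable) (ht : MeasurableSet t)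
    (hf : ∀ b, Measurable (f · b)) : MeasurableSet {a | MapsTo (f a) s t} := by
  have : {a | MapsTo (f a) s t} = ⋂ b ∈ s, (f · b) ⁻¹' t := by
    ext; simp [MapsTo]
  rw [this]
  exact .biInter hs fun b _ => hf b ht

section Action

variable {H G : Type*} [Group H] [TopologicalSpace G] [MulAction H G] [ContinuousConstSMul H G]

theorem TopologicalSpace.IsTopologicalBasis.exists_mapsTo_smul_mapsTo_inv_smul [RegularSpace G]
    {𝓑 : Set (Set G)} (h𝓑 : IsTopologicalBasis 𝓑) {g : G} {K : Set G} (hK : K ∈ 𝓝 g) (h : H) :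
    ∃ O ∈ 𝓑, ∃ U ∈ 𝓑, g ∈ U ∧ MapsTo (h • ·) U O ∧ MapsTo (h⁻¹ • ·) (closure O) K := by
  obtain ⟨O, hO, hgO, hOK⟩ := h𝓑.exists_closure_subset (x := h • g) (s := (h⁻¹ • ·) ⁻¹' K)
    ((continuous_const_smul h⁻¹).continuousAt.preimage_mem_nhds (by simpa using hK))
  obtain ⟨U, hU, hgU, hUO⟩ :=
    h𝓑.exists_subset_of_mem_open (a := g) hgO ((h𝓑.isOpen hO).preimage (continuous_const_smul h))
  exact ⟨O, hO, U, hU, hgU, hUO, hOK⟩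

variable [TopologicalSpace H] [IsTopologicalGroup H] [BaireSpace H]
  [MeasurableSpace H] [BorelSpace H] [RegularSpace G] [SecondCountableTopology G]
  [MeasurableSpace G] [OpensMeasurableSpace G]

theorem tendsto_smul_nhds_one_prod_of_measurable (hmeas : ∀ g : G, Measurable fun h : H => h • g)
    (g : G) : Tendsto (fun p : H × G => p.1 • p.2) (𝓝 1 ×ˢ 𝓝 g) (𝓝 g) := by
  intro W hW
  obtain ⟨K, ⟨hKg, hKc⟩, hKW⟩ := (closed_nhds_basis g).mem_iff.1 hW
  obtain ⟨𝓑, h𝓑c, -, h𝓑⟩ := exists_countable_basis G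
  obtain ⟨D, hDc, hD⟩ := exists_countable_dense G
  -- Testing on the countable set `D` keeps `B i` Borel; continuity of `h • ·` recovers the rest.
  let B : Set G × Set G → Set H := fun i =>
    {h | MapsTo (h • ·) (i.2 ∩ D) (closure i.1) ∧ MapsTo (h⁻¹ • ·) (i.1 ∩ D) K}
  have hcover : ∀ h, ∃ i ∈ 𝓑 ×ˢ {U ∈ 𝓑 | g ∈ U}, h ∈ B i := fun h => by
    obtain ⟨O, hO, U, hU, hgU, hUO, hOK⟩ := h𝓑.exists_mapsTo_smul_mapsTo_inv_smul hKg h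
    exact ⟨(O, U), ⟨hO, hU, hgU⟩, (hUO.mono_left inter_subset_left).mono_right subset_closure,
      hOK.mono_left (inter_subset_left.trans subset_closure)⟩
  obtain ⟨⟨O, U⟩, ⟨hO, hU, hgU⟩, hB⟩ :=
    exists_not_isMeagre_of_forall_mem (h𝓑c.prod (h𝓑c.mono (sep_subset _ _))) hcover
  have hBm : MeasurableSet (B (O, U)) :=
    (measurableSet_setOf_mapsTo (hDc.mono inter_subset_right) isClosed_closure.measurableSet
      hmeas).inter (measurableSet_setOf_mapsTo (hDc.mono inter_subset_right) hKc.measurableSet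
      fun e => (hmeas e).comp measurable_inv)
  refine mem_map.2 <| mem_of_superset (prod_mem_prod
    (hBm.baireMeasurableSet.inv_mul_mem_nhds_one hB) ((h𝓑.isOpen hU).mem_nhds hgU)) ?_
  rintro ⟨_, z⟩ ⟨⟨x, hx, y, hy, rfl⟩, hz⟩
  have hyz : y • z ∈ closure O := hy.1.closure_of_dense_inter (continuous_const_smul y) hD
    (h𝓑.isOpen hU) isClosed_closure (subset_closure hz)
  have := hx.2.closure_of_dense_inter (continuous_const_smul _) hD (h𝓑.isOpen hO) hKc hyz
  exact hKW (by simpa [mul_smul] using this)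

theorem continuousSMul_of_measurable_smul_const
    (hmeas : ∀ g : G, Measurable fun h : H => h • g) : ContinuousSMul H G where
  continuous_smul := continuous_iff_continuousAt.2 fun ⟨h, g⟩ => by
    have hshift : Tendsto (fun p : H × G => (h⁻¹ * p.1, p.2)) (𝓝 (h, g)) (𝓝 1 ×ˢ 𝓝 g) := by
      rw [← nhds_prod_eq]
      exact ((continuous_const.mul continuous_fst).prodMk continuous_snd).tendsto' _ _ (by simp)
    have := ((continuous_const_smul h).tendsto g).comp
      ((tendsto_smul_nhds_one_prod_of_measurable hmeas g).comp hshift)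
    unfold ContinuousAt
    simpa [Function.comp_def, smul_smul] using this

end Action

abbrev MonoidHom.mulDistribMulActionOfConj {G H : Type*} [Group G] [Group H] (ψ : G →* H)
    (hψ : Function.Injective ψ) (α : H × G → G) (hα : ∀ h g, ψ (α (h, g)) = h * ψ g * h⁻¹) :
    MulDistribMulAction H G where
  smul h g := α (h, g)
  one_smul g := hψ <| (hα 1 g).trans (by simp)
  mul_smul h₁ h₂ g := hψ <| by
    change ψ (α _) = ψ (α (h₁, α (h₂, g)))
    rw [hα, hα, hα]
    group
  smul_mul h g₁ g₂ := hψ <| by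
    change ψ (α _) = ψ (α (h, g₁) * α (h, g₂))
    rw [map_mul, hα, hα, hα, map_mul]
    group
  smul_one h := hψ <| (hα h 1).trans (by simp)

theorem stmt_1_general {G H : Type*}
    [Group G] [TopologicalSpace G] [IsTopologicalGroup G] [PolishSpace G]
    [Group H] [TopologicalSpace H] [IsTopologicalGroup H] [PolishSpace H]
    (ψ : G →* H) (hψc : Continuous ψ) (hψi : Function.Injective ψ)
    (α : H × G → G) (hα : ∀ (h : H) (g : G), ψ (α (h, g)) = h * ψ g * h⁻¹) :
    Continuous α := by
  borelize G H
  have hαm : Measurable α := by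
    refine (hψc.measurableEmbedding hψi).measurable_comp_iff.1 ?_
    simpa only [Function.comp_def, hα] using
      (by fun_prop : Continuous fun p : H × G => p.1 * ψ p.2 * p.1⁻¹).measurable
  let _ := ψ.mulDistribMulActionOfConj hψi α hα
  have : ContinuousConstSMul H G := ⟨fun h =>
    (MulDistribMulAction.toMonoidHom G h).continuous_of_measurable
      (hαm.comp measurable_prodMk_left)⟩
  have := continuousSMul_of_measurable_smul_const (H := H) (G := G)
    fun g => hαm.comp measurable_prodMk_right
  exact continuous_smul

/-- Let `G` and `H` be Polish groups and let `ψ : G → H` be a normal compression.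
If `α : H × G → G` is any function satisfying `ψ(α(h,g)) = h·ψ(g)·h⁻¹` for all `h ∈ H` and
`g ∈ G`, then `α` is continuous. -/
theorem stmt_1 {G H : Type*}
    [Group G] [TopologicalSpace G] [IsTopologicalGroup G] [PolishSpace G]
    [Group H] [TopologicalSpace H] [IsTopologicalGroup H] [PolishSpace H]
    (ψ : G →* H) (hψc : Continuous ψ) (hψi : Function.Injective ψ)
    (hdense : DenseRange (⇑ψ)) (hnorm : ψ.range.Normal)
    (α : H × G → G) (hα : ∀ (h : H) (g : G), ψ (α (h, g)) = h * ψ g * h⁻¹) :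
    Continuous α :=
  stmt_1_general ψ hψc hψi α hα
end

section
/- Let G and H be non-abelian Polish groups, let ψ : G → H be a normal compression, and let A be a group acting on G and on H by group automorphisms that are homeomorphisms, such that ψ is A-equivariant (ψ(a•g) = a•ψ(g) for all a ∈ A, g ∈ G). If H is A-simple, then the topological closure D of the commutator subgroup [G,G] is nontrivial, and every nontrivial closed normal A-invariant subgroup K of G contains D; in particular D is the unique smallest nontrivial closed normal A-invariant subgroup of G. -/
/-!
Since `ψ(G)` is normal in `H`, every `h : H` acts on `G` by the automorphism `ψ⁻¹ ∘ (h · h⁻¹) ∘ ψ`.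
This automorphism is Borel (a continuous injection of a Polish space is a Borel embedding), hence
continuous by Pettis' theorem, and a Baire category argument then makes the orbit maps
`h ↦ h · b` continuous on `H`. For a nontrivial closed normal `A`-invariant `K ≤ G`, the closure
of `ψ(K)` is a nontrivial closed normal `A`-invariant subgroup of `H`, so `ψ(K)` is dense in `H`.
Approximating `ψ a` by `ψ k` with `k ∈ K` then exhibits `a b a⁻¹ b⁻¹` as a limit of the elements
`k b k⁻¹ b⁻¹` of `K`.
-/

open Filter Set Topology TopologicalSpace Pointwise

section Baire

variable {α : Type*} [TopologicalSpace α]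

theorem Filter.EventuallyEq.isMeagre_iff {s t : Set α} (h : s =ᵇ t) : IsMeagre s ↔ IsMeagre t :=
  ⟨fun hs ↦ by filter_upwards [hs, h.compl.mem_iff] with x hx hxt using hxt.1 hx,
    fun ht ↦ by filter_upwards [ht, h.compl.mem_iff] with x hx hxt using hxt.2 hx⟩

theorem Filter.EventuallyEq.smul_set_residual {G : Type*} [Group G] [MulAction G α]
    [ContinuousConstSMul G α] {s t : Set α} (h : s =ᵇ t) (g : G) : g • s =ᵇ g • t := by
  have hg : Tendsto (g⁻¹ • ·) (residual α) (residual α) :=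
    tendsto_residual_of_isOpenMap (continuous_const_smul _) (isOpenMap_smul _)
  rw [← preimage_smul_inv, ← preimage_smul_inv]
  exact h.comp_tendsto hg

theorem BaireMeasurableSet.eventually_smul_inter_nonempty [Group α] [IsTopologicalGroup α]
    [BaireSpace α] {B : Set α} (hB : BaireMeasurableSet B) (hB' : ¬ IsMeagre B) :
    ∀ᶠ g in 𝓝 (1 : α), (g • B ∩ B).Nonempty := by
  obtain ⟨U, hU, hBU⟩ := hB.residualEq_isOpen
  obtain ⟨u, hu⟩ : U.Nonempty := nonempty_of_not_isMeagre (hBU.isMeagre_iff.not.mp hB')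
  have hnhds : ∀ᶠ g in 𝓝 (1 : α), g * u ∈ U :=
    (continuous_mul_const u).continuousAt.preimage_mem_nhds (by simpa using hU.mem_nhds hu)
  filter_upwards [hnhds] with g hg
  refine nonempty_of_not_isMeagre <| ((hBU.smul_set_residual g).inter hBU).isMeagre_iff.not.mpr ?_
  exact not_isMeagre_of_isOpen ((hU.smul g).inter hU) ⟨g * u, ⟨u, hu, rfl⟩, hg⟩

end Baire

section BaireMeasurable

variable {α : Type*} [TopologicalSpace α]

def BaireMeasurable {β : Type*} [TopologicalSpace β] (f : α → β) : Prop :=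
  ∀ s, IsOpen s → BaireMeasurableSet (f ⁻¹' s)

theorem MonoidHom.continuous_of_baireMeasurable [Group α] [IsTopologicalGroup α] [BaireSpace α]
    {β : Type*} [Group β] [TopologicalSpace β] [IsTopologicalGroup β] [SeparableSpace β]
    (f : α →* β) (hf : BaireMeasurable f) : Continuous f := by
  refine continuous_of_continuousAt_one f ?_
  rw [ContinuousAt, map_one]
  intro V hV
  rw [mem_map]
  obtain ⟨W, hW, hWV⟩ := exists_nhds_split_inv hV
  obtain ⟨W', hW'W, hW'o, hW'1⟩ := mem_nhds_iff.mp hW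
  obtain ⟨D, hDc, hDd⟩ := exists_countable_dense β
  set S : β → Set α := fun d ↦ f ⁻¹' ((· * d⁻¹) ⁻¹' W')
  have hcover : ⋃ d ∈ D, S d = univ := by
    refine eq_univ_of_forall fun x ↦ ?_
    obtain ⟨d, hdD, hd⟩ := hDd.exists_mem_open (hW'o.preimage (continuous_const.mul continuous_inv))
      ⟨f x, show f x * (f x)⁻¹ ∈ W' by simpa using hW'1⟩
    exact mem_biUnion hdD hd
  obtain ⟨d, -, hd⟩ := exists_of_not_isMeagre_biUnion hDc
    (hcover ▸ not_isMeagre_of_isOpen isOpen_univ univ_nonempty)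
  filter_upwards [(hf _ (hW'o.preimage (continuous_mul_const _))).eventually_smul_inter_nonempty hd]
    with g ⟨_, ⟨b, hb, rfl⟩, hgb⟩
  simpa [div_eq_mul_inv, mul_assoc] using hWV _ (hW'W hgb) _ (hW'W hb)

theorem BaireMeasurable.exists_mem_residual_continuousOn {β : Type*} [TopologicalSpace β]
    [SecondCountableTopology β] {f : α → β} (hf : BaireMeasurable f) :
    ∃ C ∈ residual α, ContinuousOn f C := by
  obtain ⟨b, hbc, -, hb⟩ := exists_countable_basis β
  choose U hUo hfU using fun s (hs : s ∈ b) ↦ (hf s (hb.isOpen hs)).residualEq_isOpen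
  set C := ⋂ (s) (hs : s ∈ b), {x | x ∈ f ⁻¹' s ↔ x ∈ U s hs}
  have hC : ∀ y ∈ C, ∀ s (hs : s ∈ b), y ∈ f ⁻¹' s ↔ y ∈ U s hs :=
    fun y hy s hs ↦ mem_iInter₂.mp hy s hs
  refine ⟨C, (countable_bInter_mem hbc).mpr fun s hs ↦ (hfU s hs).mem_iff, fun x hx ↦ ?_⟩
  rw [ContinuousWithinAt, hb.nhds_hasBasis.tendsto_right_iff]
  rintro s ⟨hs, hxs⟩
  filter_upwards [mem_nhdsWithin_of_mem_nhds ((hUo s hs).mem_nhds ((hC x hx s hs).1 hxs)),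
    self_mem_nhdsWithin] with y hyU hyC using (hC y hyC s hs).2 hyU

theorem Continuous.baireMeasurable_of_comp {X Y Z : Type*} [TopologicalSpace X]
    [TopologicalSpace Y] [PolishSpace Y] [TopologicalSpace Z] [T2Space Z] {ψ : Y → Z} {g : X → Y}
    (hψc : Continuous ψ) (hψ : Function.Injective ψ) (h : Continuous (ψ ∘ g)) :
    BaireMeasurable g := by
  borelize X Y Z
  exact fun s hs ↦ ((hψc.measurableEmbedding hψ).measurable_comp_iff.mp h.measurable
    hs.measurableSet).baireMeasurableSet

theorem continuous_of_continuousOn_residual_of_eq_comp_mul {G X : Type*} [Group G]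
    [TopologicalSpace G] [IsTopologicalGroup G] [BaireSpace G] [SequentialSpace G]
    [TopologicalSpace X] {f : G → X} {C : Set G} (hC : C ∈ residual G) (hfC : ContinuousOn f C)
    {T : G → X → X} (hT : ∀ c, Continuous (T c)) (hfT : ∀ c h, f h = T c (f (c * h))) :
    Continuous f := by
  rw [continuous_iff_seqContinuous]
  intro u h₀ hu
  -- a translate `c * ·` moving `h₀` and all the `u n` into `C` at once exists by Baire
  have hpre : ∀ y : G, {c : G | c * y ∈ C} ∈ residual G := fun y ↦
    tendsto_residual_of_isOpenMap (continuous_mul_const y) (isOpenMap_mul_right y) hC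
  obtain ⟨c, hcu, hch₀⟩ : ∃ c, (∀ n, c * u n ∈ C) ∧ c * h₀ ∈ C :=
    (dense_of_mem_residual (inter_mem (countable_iInter_mem.mpr fun n ↦ hpre (u n))
      (hpre h₀))).nonempty.imp fun c hc ↦ ⟨mem_iInter.mp hc.1, hc.2⟩
  have hlim : Tendsto (fun n ↦ f (c * u n)) atTop (𝓝 (f (c * h₀))) :=
    (hfC _ hch₀).tendsto.comp (tendsto_nhdsWithin_iff.mpr ⟨hu.const_mul c, .of_forall hcu⟩)
  simpa only [Function.comp_def, ← hfT] using ((hT c).tendsto _).comp hlim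

end BaireMeasurable

namespace MonoidHom

variable {G H : Type*} [Group G] [Group H]

noncomputable def conjOfNormalRange (ψ : G →* H) (hψ : Function.Injective ψ) [ψ.range.Normal] :
    H →* MulAut G :=
  (MulAut.congr (ofInjective hψ).symm).toMonoidHom.comp MulAut.conjNormal

variable (ψ : G →* H) (hψ : Function.Injective ψ) [ψ.range.Normal]

@[simp]
theorem apply_conjOfNormalRange (h : H) (x : G) :
    ψ (ψ.conjOfNormalRange hψ h x) = h * ψ x * h⁻¹ := by
  simp [conjOfNormalRange, MulAut.conjNormal_apply, ofInjective_apply]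

theorem conjOfNormalRange_apply_self (g x : G) :
    ψ.conjOfNormalRange hψ (ψ g) x = g * x * g⁻¹ :=
  hψ (by simp)

end MonoidHom

section NormalCompression

variable {G H : Type*} [Group G] [TopologicalSpace G] [IsTopologicalGroup G] [PolishSpace G]
  [Group H] [TopologicalSpace H] [IsTopologicalGroup H] [PolishSpace H]
  {ψ : G →* H} (hψc : Continuous ψ) (hψ : Function.Injective ψ) [ψ.range.Normal]
include hψc hψ

theorem continuous_conjOfNormalRange (h : H) : Continuous (ψ.conjOfNormalRange hψ h) := by
  refine (ψ.conjOfNormalRange hψ h).toMonoidHom.continuous_of_baireMeasurable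
    (hψc.baireMeasurable_of_comp hψ ?_)
  have : ψ ∘ ψ.conjOfNormalRange hψ h = fun x ↦ h * ψ x * h⁻¹ := funext fun x ↦ by simp
  rw [MulEquiv.coe_toMonoidHom, this]
  fun_prop

theorem continuous_conjOfNormalRange_apply (b : G) :
    Continuous fun h ↦ ψ.conjOfNormalRange hψ h b := by
  have hcomp : ψ ∘ (fun h ↦ ψ.conjOfNormalRange hψ h b) = fun h ↦ h * ψ b * h⁻¹ :=
    funext fun h ↦ by simp
  obtain ⟨C, hC, hfC⟩ := (hψc.baireMeasurable_of_comp hψ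
    (by rw [hcomp]; fun_prop)).exists_mem_residual_continuousOn
  refine continuous_of_continuousOn_residual_of_eq_comp_mul hC hfC
    (fun c ↦ continuous_conjOfNormalRange hψc hψ c⁻¹) fun c h ↦ ?_
  rw [map_mul, MulAut.mul_apply, ← MulAut.mul_apply, ← map_mul, inv_mul_cancel, map_one,
    MulAut.one_apply]

theorem commutator_le_of_dense_map {K : Subgroup G} [K.Normal] (hK : IsClosed (K : Set G))
    (hKψ : Dense (K.map ψ : Set H)) : commutator G ≤ K := by
  rw [commutator_def, Subgroup.commutator_le]
  intro a _ b _
  have hclosed : IsClosed {h | ψ.conjOfNormalRange hψ h b * b⁻¹ ∈ K} :=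
    hK.preimage ((continuous_conjOfNormalRange_apply hψc hψ b).mul continuous_const)
  have hsub : (K.map ψ : Set H) ⊆ {h | ψ.conjOfNormalRange hψ h b * b⁻¹ ∈ K} := by
    rintro _ ⟨k, hk, rfl⟩
    simpa [MonoidHom.conjOfNormalRange_apply_self, mul_assoc] using
      K.mul_mem hk (‹K.Normal›.conj_mem _ (K.inv_mem hk) b)
  have : ψ a ∈ {h | ψ.conjOfNormalRange hψ h b * b⁻¹ ∈ K} :=
    closure_minimal hsub hclosed (hKψ (ψ a))
  simpa [MonoidHom.conjOfNormalRange_apply_self, commutatorElement_def] using this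

end NormalCompression

theorem Subgroup.normal_topologicalClosure_of_dense_normalizer {H : Type*} [Group H]
    [TopologicalSpace H] [IsTopologicalGroup H] {L : Subgroup H}
    (hL : Dense (normalizer (L : Set H) : Set H)) : L.topologicalClosure.Normal := by
  refine ⟨fun n hn h ↦ ?_⟩
  have hconj : ∀ g ∈ normalizer (L : Set H), g * n * g⁻¹ ∈ L.topologicalClosure := fun g hg ↦
    map_mem_closure (f := fun x ↦ g * x * g⁻¹) (by fun_prop) hn fun x hx ↦
      (mem_normalizer_iff.mp hg x).mp hx
  exact closure_minimal hconj (L.isClosed_topologicalClosure.preimage (by fun_prop)) (hL h)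

theorem stmt_7_general {G H A : Type*}
    [Group G] [TopologicalSpace G] [IsTopologicalGroup G] [PolishSpace G]
    [Group H] [TopologicalSpace H] [IsTopologicalGroup H] [PolishSpace H]
    [Group A] [MulDistribMulAction A G] [MulDistribMulAction A H]
    (hGna : ∃ a b : G, a * b ≠ b * a)
    (hAH : ∀ a : A, Continuous fun h : H => a • h)
    (ψ : G →* H) (hψc : Continuous ψ) (hψi : Function.Injective ψ)
    (hdense : DenseRange (⇑ψ)) (hnorm : ψ.range.Normal)
    (hequiv : ∀ (a : A) (g : G), ψ (a • g) = a • ψ g)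
    (hHsimple : ∀ N : Subgroup H, N.Normal → IsClosed (N : Set H) →
      (∀ (a : A), ∀ n ∈ N, a • n ∈ N) → N = ⊥ ∨ N = ⊤) :
    (commutator G).topologicalClosure ≠ ⊥ ∧
      ∀ K : Subgroup G, K ≠ ⊥ → K.Normal → IsClosed (K : Set G) →
        (∀ (a : A), ∀ k ∈ K, a • k ∈ K) →
        (commutator G).topologicalClosure ≤ K := by
  refine ⟨?_, fun K hK hKn hKc hKA ↦ ?_⟩
  · obtain ⟨a, b, hab⟩ := hGna
    refine ne_bot_of_le_ne_bot ?_ (commutator G).le_topologicalClosure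
    rw [Ne, commutator_def, Subgroup.commutator_eq_bot_iff_le_centralizer]
    exact fun h ↦ hab (Subgroup.mem_centralizer_iff.mp (h (Subgroup.mem_top b)) a trivial)
  have := hnorm
  have := hKn
  set N := (K.map ψ).topologicalClosure
  have hNn : N.Normal := Subgroup.normal_topologicalClosure_of_dense_normalizer <|
    hdense.mono <| by
      rintro _ ⟨g, rfl⟩
      exact Subgroup.le_normalizer_map ψ
        (Subgroup.mem_map_of_mem ψ (K.normalizer_eq_top ▸ trivial))
  have hNA : ∀ a : A, ∀ n ∈ N, a • n ∈ N := by
    intro a n hn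
    rw [← SetLike.mem_coe, Subgroup.topologicalClosure_coe] at hn ⊢
    refine map_mem_closure (hAH a) hn ?_
    rintro _ ⟨k, hk, rfl⟩
    exact ⟨a • k, hKA a k hk, hequiv a k⟩
  have hN : N ≠ ⊥ := ne_bot_of_le_ne_bot ((K.map_eq_bot_iff_of_injective hψi).not.mpr hK)
    (K.map ψ).le_topologicalClosure
  have hNtop := (hHsimple N hNn (K.map ψ).isClosed_topologicalClosure hNA).resolve_left hN
  refine (commutator G).topologicalClosure_minimal (commutator_le_of_dense_map hψc hψi hKc ?_) hKc
  rw [dense_iff_closure_eq, ← Subgroup.topologicalClosure_coe]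
  exact congrArg SetLike.coe hNtop

/-- Let `G` and `H` be non-abelian Polish groups, let `ψ : G → H` be a normal
compression, and let `A` be a group acting on `G` and on `H` by group automorphisms that are
homeomorphisms, such that `ψ` is `A`-equivariant. If `H` is `A`-simple, then the topological
closure `D` of the commutator subgroup `[G,G]` is nontrivial, and every nontrivial closed
normal `A`-invariant subgroup `K` of `G` contains `D`. -/
theorem stmt_7 {G H A : Type*}
    [Group G] [TopologicalSpace G] [IsTopologicalGroup G] [PolishSpace G]
    [Group H] [TopologicalSpace H] [IsTopologicalGroup H] [PolishSpace H]
    [Group A] [MulDistribMulAction A G] [MulDistribMulAction A H]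
    (hGna : ∃ a b : G, a * b ≠ b * a) (hHna : ∃ a b : H, a * b ≠ b * a)
    (hAG : ∀ a : A, Continuous fun g : G => a • g)
    (hAH : ∀ a : A, Continuous fun h : H => a • h)
    (ψ : G →* H) (hψc : Continuous ψ) (hψi : Function.Injective ψ)
    (hdense : DenseRange (⇑ψ)) (hnorm : ψ.range.Normal)
    (hequiv : ∀ (a : A) (g : G), ψ (a • g) = a • ψ g)
    (hHsimple : ∀ N : Subgroup H, N.Normal → IsClosed (N : Set H) →
      (∀ (a : A), ∀ n ∈ N, a • n ∈ N) → N = ⊥ ∨ N = ⊤) :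
    (commutator G).topologicalClosure ≠ ⊥ ∧
      ∀ K : Subgroup G, K ≠ ⊥ → K.Normal → IsClosed (K : Set G) →
        (∀ (a : A), ∀ k ∈ K, a • k ∈ K) →
        (commutator G).topologicalClosure ≤ K :=
  stmt_7_general hGna hAH ψ hψc hψi hdense hnorm hequiv hHsimple
end

section
/- Let G be a Polish group, let K/L be a non-abelian chief factor of G, and let {1} = G₀ ≤ G₁ ≤ … ≤ Gₙ = G be a finite increasing series of closed normal subgroups of G. Then there is exactly one index i ∈ {0,…,n−1} for which there exist closed normal subgroups A and B of G with G_i ≤ B ≤ A ≤ G_{i+1} such that A/B is a non-abelian chief factor of G associated to K/L. -/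
/-- Normal factors `K₁/L₁` and `K₂/L₂` of a topological group `G` are associated if
`cl(K₁L₂) = cl(K₂L₁)`, `K₁ ∩ cl(L₁L₂) = L₁` and `K₂ ∩ cl(L₁L₂) = L₂`, where `cl` denotes
the topological closure of the subgroup generated. -/
def AssociatedFactors {G : Type*} [Group G] [TopologicalSpace G] [IsTopologicalGroup G]
    (K₁ L₁ K₂ L₂ : Subgroup G) : Prop :=
  (K₁ ⊔ L₂).topologicalClosure = (K₂ ⊔ L₁).topologicalClosure ∧
    K₁ ⊓ (L₁ ⊔ L₂).topologicalClosure = L₁ ∧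
    K₂ ⊓ (L₁ ⊔ L₂).topologicalClosure = L₂

/-- `K/L` is a chief factor of `G`: `K`, `L` are closed normal subgroups, `L < K`, and no
closed normal subgroup of `G` lies strictly between `L` and `K`. -/
def IsChiefFactor {G : Type*} [Group G] [TopologicalSpace G]
    (K L : Subgroup G) : Prop :=
  IsClosed (K : Set G) ∧ IsClosed (L : Set G) ∧ K.Normal ∧ L.Normal ∧ L < K ∧
    ∀ M : Subgroup G, M.Normal → IsClosed (M : Set G) → L < M → M < K → False

/-!
Let `C` be the centralizer of `K/L` in `G`, i.e. the preimage of the centralizer of `K/L` in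
`G/L`; as `K/L` is non-abelian, `K ∩ C = L`. Say that `H` covers `K/L` if `K ≤ cl(HL)`. By
chiefness a normal `H` either covers `K/L` or satisfies `K ∩ cl(HL) = L`, and then `[K, H] ≤ L`,
i.e. `H ≤ C`. Covering is monotone, fails for `G₀ = 1` and holds for `Gₙ = G`, so exactly one
`G_{i+1}` covers `K/L` while `G_i` does not; the top of a factor associated to `K/L` covers it and
the bottom does not, which gives uniqueness. For existence, with `N = G_{i+1}` the subgroups
`K ∩ N` and `[K ∩ N, K ∩ N]` still cover `K/L`, and `A = cl([K ∩ N, K ∩ N] (N ∩ C))`,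
`B = N ∩ C` work: a closed normal `M` with `B < M < A` either does not cover `K/L`, so
`M ≤ N ∩ C = B`, or covers it, so `[K ∩ N, K ∩ N] ≤ M` and `A ≤ M`.
-/

open scoped commutatorElement

theorem Fin.existsUnique_succ_and_not_castSucc {n : ℕ} (p : Fin (n + 1) → Prop)
    (hp : ∀ ⦃i j⦄, i ≤ j → p i → p j) (h0 : ¬ p 0) (hlast : p (Fin.last n)) :
    ∃! i : Fin n, p i.succ ∧ ¬ p i.castSucc := by
  have le_of_jump : ∀ i j : Fin n, p i.succ ∧ ¬ p i.castSucc → p j.succ → i ≤ j :=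
    fun i j hi hj => le_of_not_gt fun hji => hi.2 (hp (Fin.succ_le_castSucc_iff.2 hji) hj)
  refine existsUnique_of_exists_of_unique ?_ fun i j hi hj =>
    le_antisymm (le_of_jump i j hi hj.1) (le_of_jump j i hj hi.1)
  by_contra! hno
  have hnone : ∀ i : Fin (n + 1), ¬ p i :=
    Fin.induction h0 fun i hi hsucc => hi (hno i hsucc)
  exact hnone _ hlast

namespace Subgroup

variable {G : Type*} [Group G]

lemma exists_commutatorElement_notMem_iff {A B : Subgroup G} :
    (∃ a ∈ A, ∃ b ∈ A, a * b * a⁻¹ * b⁻¹ ∉ B) ↔ ¬ ⁅A, A⁆ ≤ B := by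
  simp [commutator_le, commutatorElement_def]

def relCentralizer (K L : Subgroup G) [L.Normal] : Subgroup G :=
  (centralizer (K.map (QuotientGroup.mk' L) : Set (G ⧸ L))).comap (QuotientGroup.mk' L)

section RelCentralizer

variable {H K L : Subgroup G} [L.Normal]

lemma mem_relCentralizer {x : G} : x ∈ relCentralizer K L ↔ ∀ k ∈ K, ⁅k, x⁆ ∈ L := by
  simp only [relCentralizer, mem_comap, mem_centralizer_iff, SetLike.mem_coe, mem_map,
    forall_exists_index, and_imp, forall_apply_eq_imp_iff₂,
    ← commutatorElement_eq_one_iff_mul_comm]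
  refine forall₂_congr fun k _ => ?_
  rw [← map_commutatorElement, QuotientGroup.mk'_apply, QuotientGroup.eq_one_iff]

lemma le_relCentralizer_iff : H ≤ relCentralizer K L ↔ ⁅K, H⁆ ≤ L := by
  rw [commutator_le]
  simp only [SetLike.le_def, mem_relCentralizer]
  exact ⟨fun h k hk x hx => h hx k hk, fun h x hx k hk => h k hk x hx⟩

lemma le_relCentralizer_self : L ≤ relCentralizer K L :=
  le_relCentralizer_iff.2 (commutator_le_right K L)

instance [hK : K.Normal] : (relCentralizer K L).Normal :=
  have : (K.map (QuotientGroup.mk' L)).Normal := hK.map _ (QuotientGroup.mk'_surjective L)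
  Normal.comap inferInstance _

end RelCentralizer

lemma commutator_sup_le {H H₁ H₂ W : Subgroup G} [W.Normal] (h₁ : ⁅H, H₁⁆ ≤ W)
    (h₂ : ⁅H, H₂⁆ ≤ W) : ⁅H, H₁ ⊔ H₂⁆ ≤ W := by
  rw [← le_relCentralizer_iff] at *
  exact sup_le h₁ h₂

variable [TopologicalSpace G] [IsTopologicalGroup G]

lemma continuous_commutatorElement : Continuous fun p : G × G => ⁅p.1, p.2⁆ := by
  simp only [commutatorElement_def]
  fun_prop

lemma commutator_topologicalClosure_le {H₁ H₂ W : Subgroup G} (hW : IsClosed (W : Set G))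
    (h : ⁅H₁, H₂⁆ ≤ W) : ⁅H₁.topologicalClosure, H₂.topologicalClosure⁆ ≤ W := by
  have hcont : ∀ x y : G, Continuous (fun z => ⁅x, z⁆) ∧ Continuous (fun z => ⁅z, y⁆) :=
    fun x y => ⟨continuous_commutatorElement.comp (Continuous.prodMk_right x),
      continuous_commutatorElement.comp (Continuous.prodMk_left y)⟩
  rw [commutator_le] at h ⊢
  have hright : ∀ x ∈ H₁, ∀ y ∈ H₂.topologicalClosure, ⁅x, y⁆ ∈ W := fun x hx =>
    closure_minimal (fun y hy => h x hx y hy) (hW.preimage (hcont x 1).1)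
  exact fun x hx y hy =>
    closure_minimal (fun x hx => hright x hx y hy) (hW.preimage (hcont 1 y).2) hx

lemma isClosed_relCentralizer {K L : Subgroup G} [L.Normal] (hL : IsClosed (L : Set G)) :
    IsClosed (relCentralizer K L : Set G) := by
  have h : (relCentralizer K L : Set G) = ⋂ k ∈ K, (fun x => ⁅k, x⁆) ⁻¹' L := by
    ext x
    simp [mem_relCentralizer]
  rw [h]
  exact isClosed_biInter fun k _ =>
    hL.preimage (continuous_commutatorElement.comp (Continuous.prodMk_right k))

end Subgroup

section ChiefFactor

open Subgroup

variable {G : Type*} [Group G] [TopologicalSpace G] {H M N K L : Subgroup G}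

section IsChiefFactor

variable (hK : IsChiefFactor K L)
include hK

lemma IsChiefFactor.isClosed_left : IsClosed (K : Set G) := hK.1

lemma IsChiefFactor.isClosed_right : IsClosed (L : Set G) := hK.2.1

lemma IsChiefFactor.normal_left : K.Normal := hK.2.2.1

lemma IsChiefFactor.normal_right : L.Normal := hK.2.2.2.1

lemma IsChiefFactor.lt : L < K := hK.2.2.2.2.1

end IsChiefFactor

lemma IsChiefFactor.eq_or_eq (hK : IsChiefFactor K L) (hMn : M.Normal)
    (hMc : IsClosed (M : Set G)) (hLM : L ≤ M) (hMK : M ≤ K) : M = L ∨ M = K := by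
  by_contra! h
  exact hK.2.2.2.2.2 M hMn hMc (hLM.lt_of_ne h.1.symm) (hMK.lt_of_ne h.2)

variable [IsTopologicalGroup G]

def CoversFactor (H K L : Subgroup G) : Prop :=
  K ≤ (H ⊔ L).topologicalClosure

lemma CoversFactor.mono (h : CoversFactor H K L) (hHM : H ≤ M) : CoversFactor M K L :=
  h.trans (topologicalClosure_mono (sup_le_sup_right hHM L))

lemma coversFactor_top : CoversFactor ⊤ K L :=
  le_top.trans (le_sup_left.trans (le_topologicalClosure _))

lemma CoversFactor.commutator_le {X W : Subgroup G} [W.Normal] (hM : CoversFactor M K L)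
    (hW : IsClosed (W : Set G)) (hXK : X ≤ K) (hXM : ⁅X, M⁆ ≤ W) (hXL : ⁅X, L⁆ ≤ W) :
    ⁅X, X⁆ ≤ W :=
  (commutator_mono (le_topologicalClosure X) (hXK.trans hM)).trans
    (commutator_topologicalClosure_le hW (commutator_sup_le hXM hXL))

lemma AssociatedFactors.coversFactor {A B : Subgroup G} (h : AssociatedFactors A B K L) :
    CoversFactor A K L :=
  (le_sup_left.trans (le_topologicalClosure _)).trans h.1.ge

lemma AssociatedFactors.not_coversFactor {A B : Subgroup G} (h : AssociatedFactors A B K L)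
    (hLK : L < K) : ¬ CoversFactor B K L := fun hB =>
  hLK.not_ge (h.2.2 ▸ le_inf le_rfl hB)

lemma IsChiefFactor.not_coversFactor_bot (hK : IsChiefFactor K L) : ¬ CoversFactor ⊥ K L :=
  fun h => hK.lt.not_ge <| h.trans <|
    topologicalClosure_minimal _ (bot_sup_eq L).le hK.isClosed_right

section NormalFactor

variable [K.Normal] [L.Normal]

lemma IsChiefFactor.inf_relCentralizer_eq (hK : IsChiefFactor K L) (hna : ¬ ⁅K, K⁆ ≤ L) :
    K ⊓ relCentralizer K L = L := by
  have hclosed : IsClosed ((K ⊓ relCentralizer K L : Subgroup G) : Set G) :=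
    hK.isClosed_left.inter (isClosed_relCentralizer hK.isClosed_right)
  refine (hK.eq_or_eq inferInstance hclosed (le_inf hK.lt.le le_relCentralizer_self)
    inf_le_left).resolve_right fun h => ?_
  exact hna (le_relCentralizer_iff.1 (inf_eq_left.1 h))

lemma IsChiefFactor.not_commutator_le_of_le_relCentralizer (hK : IsChiefFactor K L)
    (hna : ¬ ⁅K, K⁆ ≤ L) {W : Subgroup G} (hW : W ≤ relCentralizer K L) : ¬ ⁅K, K⁆ ≤ W :=
  fun hKW => hna (hK.inf_relCentralizer_eq hna ▸ le_inf (commutator_le_left K K) (hKW.trans hW))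

lemma IsChiefFactor.inf_topologicalClosure_eq_or_coversFactor (hK : IsChiefFactor K L)
    (H : Subgroup G) [H.Normal] :
    K ⊓ (H ⊔ L).topologicalClosure = L ∨ CoversFactor H K L := by
  have := is_normal_topologicalClosure (H ⊔ L)
  refine (hK.eq_or_eq inferInstance (hK.isClosed_left.inter (isClosed_topologicalClosure _))
    (le_inf hK.lt.le (le_sup_right.trans (le_topologicalClosure _)))
    inf_le_left).imp_right fun h => ?_
  exact h ▸ inf_le_right

lemma IsChiefFactor.le_relCentralizer_of_not_coversFactor (hK : IsChiefFactor K L) [H.Normal]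
    (h : ¬ CoversFactor H K L) : H ≤ relCentralizer K L := by
  refine le_relCentralizer_iff.2 ?_
  rw [← (hK.inf_topologicalClosure_eq_or_coversFactor H).resolve_right h]
  exact (commutator_le_inf K H).trans
    (inf_le_inf_left K (le_sup_left.trans (le_topologicalClosure _)))

lemma IsChiefFactor.not_commutator_le_relCentralizer (hK : IsChiefFactor K L)
    (hna : ¬ ⁅K, K⁆ ≤ L) (hH : CoversFactor H K L) : ¬ ⁅H, H⁆ ≤ relCentralizer K L := by
  intro hHH
  have hL : ∀ X : Subgroup G, ⁅X, L⁆ ≤ relCentralizer K L :=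
    fun X => (commutator_le_right X L).trans le_relCentralizer_self
  have hHL : ⁅H, H ⊔ L⁆ ≤ relCentralizer K L := commutator_sup_le hHH (hL H)
  have hLH : ⁅H ⊔ L, H ⊔ L⁆ ≤ relCentralizer K L :=
    commutator_sup_le (commutator_comm (H ⊔ L) H ▸ hHL) (hL _)
  exact hK.not_commutator_le_of_le_relCentralizer hna le_rfl <| (commutator_mono hH hH).trans
    (commutator_topologicalClosure_le (isClosed_relCentralizer hK.isClosed_right) hLH)

lemma IsChiefFactor.coversFactor_inf (hK : IsChiefFactor K L) (hna : ¬ ⁅K, K⁆ ≤ L)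
    [N.Normal] (hN : CoversFactor N K L) : CoversFactor (K ⊓ N) K L := by
  refine (hK.inf_topologicalClosure_eq_or_coversFactor (K ⊓ N)).resolve_left fun h => hna ?_
  have := is_normal_topologicalClosure (K ⊓ N ⊔ L)
  have hsub : K ⊓ N ⊔ L ≤ (K ⊓ N ⊔ L).topologicalClosure := le_topologicalClosure _
  rw [← h]
  exact le_inf (commutator_le_left K K) <| hN.commutator_le
    (isClosed_topologicalClosure _) le_rfl
    ((commutator_le_inf K N).trans (le_sup_left.trans hsub))
    ((commutator_le_right K L).trans (le_sup_right.trans hsub))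

lemma IsChiefFactor.coversFactor_commutator (hK : IsChiefFactor K L) (hna : ¬ ⁅K, K⁆ ≤ L)
    [H.Normal] (hH : CoversFactor H K L) : CoversFactor ⁅H, H⁆ K L := by
  by_contra h
  exact hK.not_commutator_le_relCentralizer hna hH (hK.le_relCentralizer_of_not_coversFactor h)

end NormalFactor

end ChiefFactor

section CoveringFactor

open Subgroup

variable {G : Type*} [Group G] [TopologicalSpace G] [IsTopologicalGroup G]
  {K L N : Subgroup G} [L.Normal]

variable (K L N) in
def coveringFactorLower : Subgroup G :=
  N ⊓ relCentralizer K L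

variable (K L N) in
def coveringFactorUpper : Subgroup G :=
  (⁅K ⊓ N, K ⊓ N⁆ ⊔ coveringFactorLower K L N).topologicalClosure

lemma coveringFactorLower_le_upper : coveringFactorLower K L N ≤ coveringFactorUpper K L N :=
  le_sup_right.trans (le_topologicalClosure _)

lemma topologicalClosure_coveringFactorLower_sup_le (hL : IsClosed (L : Set G)) :
    (coveringFactorLower K L N ⊔ L).topologicalClosure ≤ relCentralizer K L :=
  topologicalClosure_minimal _ (sup_le inf_le_right le_relCentralizer_self)
    (isClosed_relCentralizer hL)

variable [K.Normal]

lemma IsChiefFactor.le_coveringFactorLower (hK : IsChiefFactor K L) {N₀ : Subgroup G}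
    [N₀.Normal] (hN₀N : N₀ ≤ N) (hN₀ : ¬ CoversFactor N₀ K L) : N₀ ≤ coveringFactorLower K L N :=
  le_inf hN₀N (hK.le_relCentralizer_of_not_coversFactor hN₀)

variable [N.Normal]

instance : (coveringFactorLower K L N).Normal := by
  unfold coveringFactorLower; infer_instance

instance : (coveringFactorUpper K L N).Normal :=
  is_normal_topologicalClosure _

lemma coveringFactorUpper_le (hN : IsClosed (N : Set G)) : coveringFactorUpper K L N ≤ N :=
  topologicalClosure_minimal _
    (sup_le ((commutator_le_right _ _).trans inf_le_right) inf_le_left) hN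

variable (hK : IsChiefFactor K L) (hna : ¬ ⁅K, K⁆ ≤ L) (hN : CoversFactor N K L)
include hK hna hN

lemma IsChiefFactor.coversFactor_coveringFactorUpper :
    CoversFactor (coveringFactorUpper K L N) K L :=
  (hK.coversFactor_commutator hna (hK.coversFactor_inf hna hN)).mono
    (le_sup_left.trans (le_topologicalClosure _))

lemma IsChiefFactor.not_commutator_coveringFactorUpper_le :
    ¬ ⁅coveringFactorUpper K L N, coveringFactorUpper K L N⁆ ≤ coveringFactorLower K L N :=
  fun h => hK.not_commutator_le_relCentralizer hna
    (hK.coversFactor_coveringFactorUpper hna hN) (h.trans inf_le_right)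

lemma IsChiefFactor.isChiefFactor_coveringFactor (hNc : IsClosed (N : Set G)) :
    IsChiefFactor (coveringFactorUpper K L N) (coveringFactorLower K L N) := by
  have hlt : coveringFactorLower K L N < coveringFactorUpper K L N :=
    coveringFactorLower_le_upper.lt_of_ne fun h => hK.not_commutator_coveringFactorUpper_le hna hN
      ((commutator_le_left _ _).trans h.ge)
  refine ⟨isClosed_topologicalClosure _, hNc.inter (isClosed_relCentralizer hK.isClosed_right),
    inferInstance, inferInstance, hlt, fun M hMn hMc hLM hMU => ?_⟩
  by_cases hM : CoversFactor M K L
  · have : M.Normal := hMn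
    have hPL : ⁅K ⊓ N, L⁆ ≤ M :=
      (le_inf ((commutator_le_left _ _).trans inf_le_right)
        ((commutator_le_right _ _).trans le_relCentralizer_self)).trans hLM.le
    have hPP : ⁅K ⊓ N, K ⊓ N⁆ ≤ M :=
      hM.commutator_le hMc inf_le_left (commutator_le_right _ _) hPL
    exact hMU.not_ge (topologicalClosure_minimal _ (sup_le hPP hLM.le) hMc)
  · have : M.Normal := hMn
    exact hLM.not_ge (le_inf (hMU.le.trans (coveringFactorUpper_le hNc))
      (hK.le_relCentralizer_of_not_coversFactor hM))

lemma IsChiefFactor.associatedFactors_coveringFactor (hNc : IsClosed (N : Set G)) :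
    AssociatedFactors (coveringFactorUpper K L N) (coveringFactorLower K L N) K L := by
  have hcl := topologicalClosure_coveringFactorLower_sup_le (K := K) (N := N) hK.isClosed_right
  refine ⟨le_antisymm ?_ ?_, le_antisymm ?_ ?_, le_antisymm ?_ ?_⟩
  · refine topologicalClosure_minimal _ (sup_le ?_ ?_) (isClosed_topologicalClosure _)
    · exact topologicalClosure_mono
        (sup_le_sup_right ((commutator_le_left _ _).trans inf_le_left) _)
    · exact hK.lt.le.trans (le_sup_left.trans (le_topologicalClosure _))
  · refine topologicalClosure_minimal _ (sup_le ?_ ?_) (isClosed_topologicalClosure _)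
    · exact hK.coversFactor_coveringFactorUpper hna hN
    · exact coveringFactorLower_le_upper.trans (le_sup_left.trans (le_topologicalClosure _))
  · exact le_inf (inf_le_left.trans (coveringFactorUpper_le hNc)) (inf_le_right.trans hcl)
  · exact le_inf coveringFactorLower_le_upper (le_sup_left.trans (le_topologicalClosure _))
  · exact (inf_le_inf_left K hcl).trans (hK.inf_relCentralizer_eq hna).le
  · exact le_inf hK.lt.le (le_sup_right.trans (le_topologicalClosure _))

end CoveringFactor

theorem stmt_19_general {G : Type*} [Group G] [TopologicalSpace G] [IsTopologicalGroup G]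
    (K L : Subgroup G) (hchief : IsChiefFactor K L)
    (hna : ∃ a ∈ K, ∃ b ∈ K, a * b * a⁻¹ * b⁻¹ ∉ L)
    (n : ℕ) (Gs : Fin (n + 1) → Subgroup G) (hmono : Monotone Gs)
    (h0 : Gs 0 = ⊥) (hlast : Gs (Fin.last n) = ⊤)
    (hclosed : ∀ i, IsClosed ((Gs i : Subgroup G) : Set G))
    (hnormal : ∀ i, (Gs i).Normal) :
    ∃! i : Fin n, ∃ A B : Subgroup G,
      Gs i.castSucc ≤ B ∧ B ≤ A ∧ A ≤ Gs i.succ ∧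
      IsChiefFactor A B ∧
      (∃ a ∈ A, ∃ b ∈ A, a * b * a⁻¹ * b⁻¹ ∉ B) ∧
      AssociatedFactors A B K L := by
  have := hchief.normal_left
  have := hchief.normal_right
  rw [Subgroup.exists_commutatorElement_notMem_iff] at hna
  obtain ⟨i, ⟨hcov, hncov⟩, huniq⟩ := Fin.existsUnique_succ_and_not_castSucc
    (fun i => CoversFactor (Gs i) K L) (fun i j hij hi => hi.mono (hmono hij))
    (h0 ▸ hchief.not_coversFactor_bot) (hlast ▸ coversFactor_top)
  have := hnormal i.succ
  have := hnormal i.castSucc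
  refine ⟨i, ⟨coveringFactorUpper K L (Gs i.succ), coveringFactorLower K L (Gs i.succ),
    hchief.le_coveringFactorLower (hmono i.castSucc_le_succ) hncov, coveringFactorLower_le_upper,
    coveringFactorUpper_le (hclosed _), hchief.isChiefFactor_coveringFactor hna hcov (hclosed _),
    Subgroup.exists_commutatorElement_notMem_iff.2
      (hchief.not_commutator_coveringFactorUpper_le hna hcov),
    hchief.associatedFactors_coveringFactor hna hcov (hclosed _)⟩, ?_⟩
  rintro j ⟨A, B, hjB, -, hAj, -, -, hassoc⟩
  exact huniq j ⟨hassoc.coversFactor.mono hAj,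
    fun hj => hassoc.not_coversFactor hchief.lt (hj.mono hjB)⟩

/-- Let `G` be a Polish group, let `K/L` be a non-abelian chief factor of `G`,
and let `{1} = G₀ ≤ G₁ ≤ … ≤ Gₙ = G` be a finite increasing series of closed normal
subgroups of `G`. Then there is exactly one index `i ∈ {0,…,n−1}` for which there exist
closed normal subgroups `A` and `B` of `G` with `Gᵢ ≤ B ≤ A ≤ Gᵢ₊₁` such that `A/B` is a
non-abelian chief factor of `G` associated to `K/L`. -/
theorem stmt_19 {G : Type*} [Group G] [TopologicalSpace G] [IsTopologicalGroup G]
    [PolishSpace G]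
    (K L : Subgroup G) (hchief : IsChiefFactor K L)
    (hna : ∃ a ∈ K, ∃ b ∈ K, a * b * a⁻¹ * b⁻¹ ∉ L)
    (n : ℕ) (Gs : Fin (n + 1) → Subgroup G) (hmono : Monotone Gs)
    (h0 : Gs 0 = ⊥) (hlast : Gs (Fin.last n) = ⊤)
    (hclosed : ∀ i, IsClosed ((Gs i : Subgroup G) : Set G))
    (hnormal : ∀ i, (Gs i).Normal) :
    ∃! i : Fin n, ∃ A B : Subgroup G,
      Gs i.castSucc ≤ B ∧ B ≤ A ∧ A ≤ Gs i.succ ∧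
      IsChiefFactor A B ∧
      (∃ a ∈ A, ∃ b ∈ A, a * b * a⁻¹ * b⁻¹ ∉ B) ∧
      AssociatedFactors A B K L :=
  stmt_19_general K L hchief hna n Gs hmono h0 hlast hclosed hnormal
end
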